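/- arXiv:1905.11157 — 2 statements merged into one kernel-verified Lean document; each statement's English description precedes it below -/
import Mathlib

section
/- ResBurst is equivalent to LenBurst: for all σ, [b,e], K, B with K ≤ B−1, no subinterval of [b,e] satisfies RecoveryErr(B, HasBurstErr(A,K)) if and only if no subinterval of [b,e] of length ≤ B−1 satisfies HasBurstErr(A,K). -/
def BurstErr {PV : Type*} (σ : ℕ → Set PV) (A : PV) (k b e : ℕ) : Prop :=
  (∀ i, b ≤ i → i ≤ e → A ∉ σ i) ∧ k ≤ e - b

def HasBurstErr {PV : Type*} (σ : ℕ → Set PV) (A : PV) (k b e : ℕ) : Prop :=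
  ∃ b' e', b ≤ b' ∧ b' ≤ e' ∧ e' ≤ e ∧ BurstErr σ A k b' e'

def HasNoRecovery {PV : Type*} (σ : ℕ → Set PV) (A : PV) (B b e : ℕ) : Prop :=
  ∀ b' e', b ≤ b' → b' ≤ e' → e' ≤ e → (∀ i, b' ≤ i → i ≤ e' → A ∈ σ i) →
    e' - b' < B - 1

def RecoveryErr {PV : Type*} (σ : ℕ → Set PV) (A : PV) (B : ℕ)
    (Err : (ℕ → Set PV) → ℕ → ℕ → Prop) (b e : ℕ) : Prop :=
  Err σ b e ∧ HasNoRecovery σ A B b e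

/-!
A burst of length at least `K` can be cut down to one of length exactly `K`. Such a tight burst
has length `K ≤ B - 1`, and since `A` fails throughout it, it contains no interval on which `A`
holds, so it is also a recovery error. Hence both sides say that no tight burst fits in `[b, e]`.
-/

section Burst

variable {PV : Type*} {σ : ℕ → Set PV} {A : PV} {k b e : ℕ}

theorem BurstErr.hasBurstErr (h : BurstErr σ A k b e) (hbe : b ≤ e) : HasBurstErr σ A k b e :=
  ⟨b, e, le_rfl, hbe, le_rfl, h⟩

theorem BurstErr.hasNoRecovery (h : BurstErr σ A k b e) (B : ℕ) : HasNoRecovery σ A B b e :=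
  fun x _ hbx hxy hye hA => absurd (hA x le_rfl hxy) (h.1 x hbx (hxy.trans hye))

theorem BurstErr.truncate (h : BurstErr σ A k b e) (hbe : b ≤ e) : BurstErr σ A k b (b + k) :=
  ⟨fun i hbi hik => h.1 i hbi (by have := h.2; omega), by omega⟩

theorem HasBurstErr.exists_burstErr_tight (h : HasBurstErr σ A k b e) :
    ∃ u, b ≤ u ∧ u + k ≤ e ∧ BurstErr σ A k u (u + k) := by
  obtain ⟨u, v, hbu, huv, hve, hburst⟩ := h
  exact ⟨u, hbu, by have := hburst.2; omega, hburst.truncate huv⟩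

end Burst

theorem resBurst_iff_lenBurst {PV : Type*} (σ : ℕ → Set PV) (A : PV)
    (K B b e : ℕ) (hKB : K ≤ B - 1) :
    (¬ ∃ b' e', b ≤ b' ∧ b' ≤ e' ∧ e' ≤ e ∧
        RecoveryErr σ A B (fun ρ x y => HasBurstErr ρ A K x y) b' e') ↔
    (¬ ∃ b' e', b ≤ b' ∧ b' ≤ e' ∧ e' ≤ e ∧ e' - b' ≤ B - 1 ∧ HasBurstErr σ A K b' e') := by
  rw [not_iff_not]
  constructor
  · rintro ⟨b', e', hbb', -, he'e, hburst, -⟩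
    obtain ⟨u, hb'u, huK, htight⟩ := hburst.exists_burstErr_tight
    exact ⟨u, u + K, hbb'.trans hb'u, Nat.le_add_right u K, huK.trans he'e, by omega,
      htight.hasBurstErr (Nat.le_add_right u K)⟩
  · rintro ⟨b', e', hbb', -, he'e, -, hburst⟩
    obtain ⟨u, hb'u, huK, htight⟩ := hburst.exists_burstErr_tight
    exact ⟨u, u + K, hbb'.trans hb'u, Nat.le_add_right u K, huK.trans he'e,
      htight.hasBurstErr (Nat.le_add_right u K), htight.hasNoRecovery B⟩
end

section
/- The union of all non-blocking prefix-closed subsets of a prefix-closed language L is itself non-blocking and prefix-closed; hence if any supervisor realizing invariance of L exists, a unique maximally permissive supervisor for L exists. -/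
def IsSupervisor {I O : Type*} (S : Set (List (Set I × Set O))) : Prop :=
  [] ∈ S ∧ (∀ w ∈ S, ∀ p, p <+: w → p ∈ S) ∧
    (∀ w ∈ S, ∀ i : Set I, ∃ o : Set O, w ++ [(i, o)] ∈ S)

theorem IsSupervisor.sUnion {I O : Type*} {𝒮 : Set (Set (List (Set I × Set O)))}
    (hne : 𝒮.Nonempty) (h𝒮 : ∀ S ∈ 𝒮, IsSupervisor S) : IsSupervisor (⋃₀ 𝒮) := by
  obtain ⟨S₀, hS₀⟩ := hne
  refine ⟨⟨S₀, hS₀, (h𝒮 S₀ hS₀).1⟩, ?prefixClosed, ?nonblocking⟩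
  case prefixClosed =>
    rintro w ⟨S, hS, hw⟩ p hp
    exact ⟨S, hS, (h𝒮 S hS).2.1 w hw p hp⟩
  case nonblocking =>
    rintro w ⟨S, hS, hw⟩ i
    obtain ⟨o, ho⟩ := (h𝒮 S hS).2.2 w hw i
    exact ⟨o, S, hS, ho⟩

theorem mps_exists_general {I O : Type*} (L : Set (List (Set I × Set O)))
    (hex : ∃ S, IsSupervisor S ∧ S ⊆ L) :
    IsSupervisor {w | ∃ S, IsSupervisor S ∧ S ⊆ L ∧ w ∈ S} ∧
    {w | ∃ S, IsSupervisor S ∧ S ⊆ L ∧ w ∈ S} ⊆ L ∧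
    ∀ S, IsSupervisor S → S ⊆ L → S ⊆ {w | ∃ S', IsSupervisor S' ∧ S' ⊆ L ∧ w ∈ S'} := by
  have hunion : {w | ∃ S, IsSupervisor S ∧ S ⊆ L ∧ w ∈ S} =
      ⋃₀ {S | IsSupervisor S ∧ S ⊆ L} := by
    ext w
    simp only [Set.mem_ofPred_eq, Set.mem_sUnion, and_assoc]
  rw [hunion]
  refine ⟨IsSupervisor.sUnion hex fun S hS => hS.1, ?_, ?_⟩
  · exact Set.sUnion_subset fun S hS => hS.2
  · exact fun S hS hSL => Set.subset_sUnion_of_mem ⟨hS, hSL⟩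

/-- The union of all supervisors contained in a prefix-closed language `L` is itself
a supervisor contained in `L`, and contains every supervisor contained in `L`;
hence it is the unique maximally permissive supervisor whenever any supervisor
realizing invariance of `L` exists. -/
theorem mps_exists {I O : Type*} (L : Set (List (Set I × Set O)))
    (hL0 : [] ∈ L) (hLpc : ∀ w ∈ L, ∀ p, p <+: w → p ∈ L)
    (hex : ∃ S, IsSupervisor S ∧ S ⊆ L) :
    IsSupervisor {w | ∃ S, IsSupervisor S ∧ S ⊆ L ∧ w ∈ S} ∧
    {w | ∃ S, IsSupervisor S ∧ S ⊆ L ∧ w ∈ S} ⊆ L ∧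
    ∀ S, IsSupervisor S → S ⊆ L → S ⊆ {w | ∃ S', IsSupervisor S' ∧ S' ⊆ L ∧ w ∈ S'} :=
  mps_exists_general L hex
end
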